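/- arXiv:2002.00292 — 2 statements merged into one kernel-verified Lean document; each statement's English description precedes it below -/
import Mathlib

section
/- Let G be a finite simple graph with no isolated vertices and n vertices. Then R(G) = n/2 − (1/2)·Σ_{uv∈E(G)} (√(d_u) − √(d_v))²/(d_u d_v). -/
open Finset

variable {V : Type*}

/-- Randić index: `Σ_{uv∈E} (d_u d_v)^{-1/2}`, written as half a double sum over vertices. -/
noncomputable def randicIndex [Fintype V] (G : SimpleGraph V) [DecidableRel G.Adj] : ℝ :=
  (1 / 2) * ∑ u, ∑ v ∈ G.neighborFinset u,
    1 / Real.sqrt ((G.degree u : ℝ) * (G.degree v : ℝ))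

/-! Expanding `(√d_u - √d_v)² / (d_u d_v) = 1/d_u + 1/d_v - 2/√(d_u d_v)` and summing over
adjacent pairs, each of the two sums of reciprocal degrees counts every vertex once, giving `n`;
the cross terms give `-4 R(G)`. -/

lemma Real.sq_sqrt_sub_sqrt_div_mul {a b : ℝ} (ha : 0 < a) (hb : 0 < b) :
    (√a - √b) ^ 2 / (a * b) = 1 / a + 1 / b - 2 * (1 / √(a * b)) := by
  have key (x y : ℝ) (hx : 0 < x) (hy : 0 < y) :
      (x - y) ^ 2 / (x ^ 2 * y ^ 2) = 1 / x ^ 2 + 1 / y ^ 2 - 2 * (1 / (x * y)) := by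
    field_simp
    ring
  have := key √a √b (Real.sqrt_pos.mpr ha) (Real.sqrt_pos.mpr hb)
  rwa [Real.sq_sqrt ha.le, Real.sq_sqrt hb.le, ← Real.sqrt_mul ha.le] at this

namespace SimpleGraph

variable [Fintype V] (G : SimpleGraph V) [DecidableRel G.Adj]

lemma sum_sum_neighborFinset_comm {M : Type*} [AddCommMonoid M] (f : V → V → M) :
    ∑ u, ∑ v ∈ G.neighborFinset u, f u v = ∑ u, ∑ v ∈ G.neighborFinset u, f v u :=
  Finset.sum_comm' fun u v => by simp [G.adj_comm]

lemma sum_sum_neighborFinset_one_div_degree (hiso : ∀ v, 0 < G.degree v) :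
    ∑ u, ∑ _v ∈ G.neighborFinset u, 1 / (G.degree u : ℝ) = Fintype.card V := by
  rw [← Finset.card_univ, Finset.card_eq_sum_ones, Nat.cast_sum]
  refine Finset.sum_congr rfl fun u _ => ?_
  have hu : (G.degree u : ℝ) ≠ 0 := by exact_mod_cast (hiso u).ne'
  rw [Finset.sum_const, card_neighborFinset_eq_degree, nsmul_eq_mul, mul_one_div_cancel hu,
    Nat.cast_one]

end SimpleGraph

theorem randic_diff_identity [Fintype V] (G : SimpleGraph V) [DecidableRel G.Adj]
    (hiso : ∀ v : V, 0 < G.degree v) :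
    randicIndex G = (Fintype.card V : ℝ) / 2 -
      (1 / 2) * ((1 / 2) * ∑ u, ∑ v ∈ G.neighborFinset u,
        (Real.sqrt (G.degree u) - Real.sqrt (G.degree v))^2 /
          ((G.degree u : ℝ) * (G.degree v : ℝ))) := by
  have hdeg (u : V) : (0 : ℝ) < G.degree u := by exact_mod_cast hiso u
  have hn := G.sum_sum_neighborFinset_one_div_degree hiso
  have hn' : ∑ u, ∑ v ∈ G.neighborFinset u, 1 / (G.degree v : ℝ) = Fintype.card V := by
    rw [G.sum_sum_neighborFinset_comm fun _ v => 1 / (G.degree v : ℝ), hn]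
  simp only [Real.sq_sqrt_sub_sqrt_div_mul (hdeg _) (hdeg _), Finset.sum_sub_distrib,
    Finset.sum_add_distrib, ← Finset.mul_sum, hn, hn', randicIndex]
  ring
end

section
/- Let G be a finite simple graph with no isolated vertices, n vertices, minimum degree δ and maximum degree Δ. Then (M_1(G) + 2M_2^{1/2}(G))/(2Δ²) − n/2 ≤ R(G) ≤ (M_1(G) + 2M_2^{1/2}(G))/(2δ²) − n/2, with equality in either bound if and only if G is regular. -/
open Finset

variable {V : Type*}

/-- First Zagreb index `M₁(G) = Σ_{u∈V} d_u²`. -/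
noncomputable def zagreb1 [Fintype V] (G : SimpleGraph V) [DecidableRel G.Adj] : ℝ :=
  ∑ u, (G.degree u : ℝ)^2

/-- Variable second Zagreb index with exponent 1/2: `M₂^{1/2}(G) = Σ_{uv∈E} √(d_u d_v)`. -/
noncomputable def zagreb2half [Fintype V] (G : SimpleGraph V) [DecidableRel G.Adj] : ℝ :=
  (1 / 2) * ∑ u, ∑ v ∈ G.neighborFinset u,
    Real.sqrt ((G.degree u : ℝ) * (G.degree v : ℝ))

/-!
Write `d` for degrees, `a = d u` and `s = √(d u d v)`. Counting each edge from both ends,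
`M₁ + 2 M₂^{1/2} = Σ_u Σ_{v ~ u} (a + s)`, `n = Σ_u Σ_{v ~ u} 1/a` and `2R = Σ_u Σ_{v ~ u} 1/s`,
so the bound minus `R` is `Σ_u Σ_{v ~ u} (a + s)/2 · (1/c² - 1/(a s))` with `c = Δ` or `c = δ`.
When all degrees are `≤ c` (or all `≥ c`), each term has the sign of `a s - c²`, and it vanishes
exactly when both ends have degree `c`.
-/

theorem mul_inv_sub_inv_nonneg_and_eq_zero_iff {K : Type*} [Field K] [LinearOrder K]
    [IsStrictOrderedRing K] {w x y : K} (hw : 0 < w) (hx : 0 < x) (hxy : x ≤ y) :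
    0 ≤ w * (x⁻¹ - y⁻¹) ∧ (w * (x⁻¹ - y⁻¹) = 0 ↔ x = y) := by
  refine ⟨mul_nonneg hw.le (sub_nonneg.2 (inv_anti₀ hx hxy)), ?_⟩
  rw [mul_eq_zero, sub_eq_zero, inv_inj, or_iff_right hw.ne']

namespace Real

lemma mul_sqrt_mul_le_sq {a b c : ℝ} (ha : 0 < a) (hb : 0 < b) (hac : a ≤ c) (hbc : b ≤ c) :
    a * √(a * b) ≤ c ^ 2 ∧ (a * √(a * b) = c ^ 2 ↔ a = c ∧ b = c) := by
  have hs : √(a * b) ≤ c := sqrt_le_iff.2 ⟨ha.le.trans hac, by nlinarith⟩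
  have hs_sq : √(a * b) ^ 2 = a * b := sq_sqrt (mul_pos ha hb).le
  refine ⟨by nlinarith [sqrt_nonneg (a * b)], fun h => ?_, ?_⟩
  · have hs_eq : √(a * b) = c := by nlinarith [sqrt_nonneg (a * b)]
    have hac_eq : a = c := by nlinarith [sqrt_nonneg (a * b)]
    exact ⟨hac_eq, by subst hac_eq; nlinarith⟩
  · rintro ⟨rfl, rfl⟩
    rw [sqrt_mul_self ha.le, sq]

lemma sq_le_mul_sqrt_mul {a b c : ℝ} (ha : 0 < a) (hb : 0 < b) (hc : 0 ≤ c) (hca : c ≤ a)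
    (hcb : c ≤ b) : c ^ 2 ≤ a * √(a * b) ∧ (c ^ 2 = a * √(a * b) ↔ a = c ∧ b = c) := by
  have hs : c ≤ √(a * b) := le_sqrt_of_sq_le (by nlinarith)
  have hs_sq : √(a * b) ^ 2 = a * b := sq_sqrt (mul_pos ha hb).le
  refine ⟨by nlinarith, fun h => ?_, ?_⟩
  · have hc_pos : 0 < c := by nlinarith [sqrt_pos.2 (mul_pos ha hb)]
    have hs_eq : √(a * b) = c := by nlinarith
    have hac_eq : a = c := by nlinarith
    exact ⟨hac_eq, by subst hac_eq; nlinarith⟩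
  · rintro ⟨rfl, rfl⟩
    rw [sqrt_mul_self hc, sq]

end Real

namespace SimpleGraph

variable [Fintype V] (G : SimpleGraph V) [DecidableRel G.Adj]

theorem exists_isRegularOfDegree_iff_forall_degree_eq_maxDegree :
    (∃ k, G.IsRegularOfDegree k) ↔ ∀ v, G.degree v = G.maxDegree := by
  refine ⟨fun ⟨k, hk⟩ v => ?_, fun h => ⟨_, h⟩⟩
  have : Nonempty V := ⟨v⟩
  rw [hk.maxDegree_eq, hk.degree_eq]

theorem exists_isRegularOfDegree_iff_forall_degree_eq_minDegree :
    (∃ k, G.IsRegularOfDegree k) ↔ ∀ v, G.degree v = G.minDegree := by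
  refine ⟨fun ⟨k, hk⟩ v => ?_, fun h => ⟨_, h⟩⟩
  have : Nonempty V := ⟨v⟩
  rw [hk.minDegree_eq, hk.degree_eq]

variable {G}

theorem forall_neighborFinset_and_iff (hiso : ∀ v, 0 < G.degree v) {p : V → Prop} :
    (∀ u, ∀ v ∈ G.neighborFinset u, p u ∧ p v) ↔ ∀ v, p v := by
  refine ⟨fun h u => ?_, fun h u v _ => ⟨h u, h v⟩⟩
  obtain ⟨v, hv⟩ := card_pos.1 ((G.card_neighborFinset_eq_degree u).symm ▸ hiso u)
  exact (h u v hv).1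

theorem sum_sum_neighborFinset_inv_degree (hiso : ∀ v, 0 < G.degree v) :
    ∑ u, ∑ _v ∈ G.neighborFinset u, (G.degree u : ℝ)⁻¹ = Fintype.card V := by
  have hd : ∀ u, (G.degree u : ℝ) ≠ 0 := fun u => by exact_mod_cast (hiso u).ne'
  simp [card_neighborFinset_eq_degree, hd]

variable (G)

theorem zagreb1_add_two_mul_zagreb2half :
    zagreb1 G + 2 * zagreb2half G =
      ∑ u, ∑ v ∈ G.neighborFinset u, ((G.degree u : ℝ) + √(G.degree u * G.degree v)) := by
  simp only [zagreb1, zagreb2half, sum_add_distrib, sum_const, card_neighborFinset_eq_degree,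
    nsmul_eq_mul, sq]
  ring

noncomputable def zagrebRandicBound (c : ℝ) : ℝ :=
  (zagreb1 G + 2 * zagreb2half G) / (2 * c ^ 2) - (Fintype.card V : ℝ) / 2

variable {G}

theorem zagrebRandicBound_sub_randicIndex (hiso : ∀ v, 0 < G.degree v) (c : ℝ) :
    G.zagrebRandicBound c - randicIndex G =
      ∑ u, ∑ v ∈ G.neighborFinset u, ((G.degree u : ℝ) + √(G.degree u * G.degree v)) / 2 *
        ((c ^ 2)⁻¹ - (G.degree u * √(G.degree u * G.degree v))⁻¹) := by
  rw [zagrebRandicBound, zagreb1_add_two_mul_zagreb2half,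
    ← sum_sum_neighborFinset_inv_degree hiso, randicIndex]
  simp only [sum_div, mul_sum, ← sum_sub_distrib]
  refine sum_congr rfl fun u _ => sum_congr rfl fun v hv => ?_
  have hu : (G.degree u : ℝ) ≠ 0 := by exact_mod_cast (hiso u).ne'
  have hs : √(G.degree u * G.degree v : ℝ) ≠ 0 :=
    (Real.sqrt_pos.2 (by have := hiso v; positivity)).ne'
  field_simp
  ring

theorem sum_sum_neighborFinset_nonneg_and_eq_zero_iff (hiso : ∀ v, 0 < G.degree v)
    {f : V → V → ℝ} {p : V → Prop}
    (hf : ∀ u, ∀ v ∈ G.neighborFinset u, 0 ≤ f u v ∧ (f u v = 0 ↔ p u ∧ p v)) :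
    0 ≤ ∑ u, ∑ v ∈ G.neighborFinset u, f u v ∧
      (∑ u, ∑ v ∈ G.neighborFinset u, f u v = 0 ↔ ∀ v, p v) := by
  have hsum : ∀ u, 0 ≤ ∑ v ∈ G.neighborFinset u, f u v :=
    fun u => sum_nonneg fun v hv => (hf u v hv).1
  refine ⟨sum_nonneg fun u _ => hsum u, ?_⟩
  rw [sum_eq_zero_iff_of_nonneg fun u _ => hsum u, ← forall_neighborFinset_and_iff hiso (p := p)]
  simp only [mem_univ, true_implies]
  refine forall_congr' fun u => ?_
  rw [sum_eq_zero_iff_of_nonneg fun v hv => (hf u v hv).1]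
  exact forall₂_congr fun v hv => (hf u v hv).2

theorem zagrebRandicBound_le_randicIndex (hiso : ∀ v, 0 < G.degree v) {c : ℝ}
    (hc : ∀ v, (G.degree v : ℝ) ≤ c) :
    G.zagrebRandicBound c ≤ randicIndex G ∧
      (G.zagrebRandicBound c = randicIndex G ↔ ∀ v, (G.degree v : ℝ) = c) := by
  have hd : ∀ v, (0 : ℝ) < G.degree v := fun v => by exact_mod_cast hiso v
  have key := sum_sum_neighborFinset_nonneg_and_eq_zero_iff hiso
    (f := fun u v => ((G.degree u : ℝ) + √(G.degree u * G.degree v)) / 2 *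
      ((G.degree u * √(G.degree u * G.degree v))⁻¹ - (c ^ 2)⁻¹))
    (p := fun v => (G.degree v : ℝ) = c) fun u v _ => by
      obtain ⟨hle, heq⟩ := Real.mul_sqrt_mul_le_sq (hd u) (hd v) (hc u) (hc v)
      have hpos : 0 < (G.degree u : ℝ) * √(G.degree u * G.degree v) := by
        have := hd v; have := hd u; positivity
      have hw : 0 < ((G.degree u : ℝ) + √(G.degree u * G.degree v)) / 2 := by
        have := hd u; positivity
      exact (mul_inv_sub_inv_nonneg_and_eq_zero_iff hw hpos hle).imp_right (·.trans heq)
  have hdiff : randicIndex G - G.zagrebRandicBound c = ∑ u, ∑ v ∈ G.neighborFinset u,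
      ((G.degree u : ℝ) + √(G.degree u * G.degree v)) / 2 *
        ((G.degree u * √(G.degree u * G.degree v))⁻¹ - (c ^ 2)⁻¹) := by
    rw [← neg_sub, zagrebRandicBound_sub_randicIndex hiso]
    simp only [← sum_neg_distrib, ← mul_neg, neg_sub]
  rw [← hdiff, sub_nonneg, sub_eq_zero, eq_comm] at key
  exact key

theorem randicIndex_le_zagrebRandicBound (hiso : ∀ v, 0 < G.degree v) {c : ℝ} (hc_pos : 0 < c)
    (hc : ∀ v, c ≤ (G.degree v : ℝ)) :
    randicIndex G ≤ G.zagrebRandicBound c ∧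
      (randicIndex G = G.zagrebRandicBound c ↔ ∀ v, (G.degree v : ℝ) = c) := by
  have hd : ∀ v, (0 : ℝ) < G.degree v := fun v => by exact_mod_cast hiso v
  have key := sum_sum_neighborFinset_nonneg_and_eq_zero_iff hiso
    (f := fun u v => ((G.degree u : ℝ) + √(G.degree u * G.degree v)) / 2 *
      ((c ^ 2)⁻¹ - (G.degree u * √(G.degree u * G.degree v))⁻¹))
    (p := fun v => (G.degree v : ℝ) = c) fun u v _ => by
      obtain ⟨hle, heq⟩ := Real.sq_le_mul_sqrt_mul (hd u) (hd v) hc_pos.le (hc u) (hc v)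
      have hw : 0 < ((G.degree u : ℝ) + √(G.degree u * G.degree v)) / 2 := by
        have := hd u; positivity
      exact (mul_inv_sub_inv_nonneg_and_eq_zero_iff hw (by positivity) hle).imp_right (·.trans heq)
  rw [← zagrebRandicBound_sub_randicIndex hiso, sub_nonneg, sub_eq_zero, eq_comm] at key
  exact key

end SimpleGraph

theorem randic_zagreb_plus_bounds [Fintype V] (G : SimpleGraph V) [DecidableRel G.Adj]
    (hiso : ∀ v : V, 0 < G.degree v) :
    ((zagreb1 G + 2 * zagreb2half G) / (2 * (G.maxDegree : ℝ)^2) -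
        (Fintype.card V : ℝ) / 2 ≤ randicIndex G ∧
      randicIndex G ≤ (zagreb1 G + 2 * zagreb2half G) / (2 * (G.minDegree : ℝ)^2) -
        (Fintype.card V : ℝ) / 2) ∧
    ((zagreb1 G + 2 * zagreb2half G) / (2 * (G.maxDegree : ℝ)^2) -
        (Fintype.card V : ℝ) / 2 = randicIndex G ↔ ∃ k, G.IsRegularOfDegree k) ∧
    (randicIndex G = (zagreb1 G + 2 * zagreb2half G) / (2 * (G.minDegree : ℝ)^2) -
        (Fintype.card V : ℝ) / 2 ↔ ∃ k, G.IsRegularOfDegree k) := by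
  rcases isEmpty_or_nonempty V with _ | _
  · simp [randicIndex, zagreb1, zagreb2half]
  have hδ : (0 : ℝ) < G.minDegree := by
    obtain ⟨v, hv⟩ := G.exists_minimal_degree_vertex
    exact_mod_cast hv ▸ hiso v
  obtain ⟨hlower, hlower_eq⟩ := G.zagrebRandicBound_le_randicIndex hiso
    fun v => Nat.cast_le.2 (G.degree_le_maxDegree v)
  obtain ⟨hupper, hupper_eq⟩ := G.randicIndex_le_zagrebRandicBound hiso hδ
    fun v => Nat.cast_le.2 (G.minDegree_le_degree v)
  simp only [Nat.cast_inj, ← G.exists_isRegularOfDegree_iff_forall_degree_eq_maxDegree,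
    ← G.exists_isRegularOfDegree_iff_forall_degree_eq_minDegree] at hlower_eq hupper_eq
  exact ⟨⟨hlower, hupper⟩, hlower_eq, hupper_eq⟩
end
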